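/- arXiv:2004.08125 — 8 statements merged into one kernel-verified Lean document; each statement's English description precedes it below -/
import Mathlib

section
/- Let α > 0 and k, ξ ∈ ℝ with k² + ξ² > 0, and let f, g : ℝ → ℂ be differentiable with f'(t) = I·k·g(t) and g'(t) = (I·α·k/(k² + ξ²))·f(t) for all t, with f(0) = f₀, g(0) = g₀. Then for all t ∈ ℝ: ‖f(t)‖ ≤ ‖f₀‖ + (Real.sqrt (k² + ξ²)/Real.sqrt α)·‖g₀‖ and Real.sqrt (k² + ξ²)·‖g(t)‖ ≤ Real.sqrt α·‖f₀‖ + Real.sqrt (k² + ξ²)·‖g₀‖ (uniform-in-time stability of the vorticity and temperature modes). -/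
/-!
The energy `α ‖f‖² + (k² + ξ²) ‖g‖²` is conserved: multiplication by `I` is skew-adjoint for
the real inner product on `ℂ`, and the weights are chosen so that the two cross terms in its
derivative cancel. Both bounds then follow from `√(a x² + b y²) ≤ √a x + √b y`.
-/

open Complex

theorem Complex.real_inner_I_mul_eq_neg (z w : ℂ) :
    inner ℝ z (I * w) = -inner ℝ w (I * z) := by
  simp only [Complex.inner, mul_re, mul_im, conj_re, conj_im, I_re, I_im]
  ring

theorem energy_eq_of_hasDerivAt {a b c d : ℝ} (hcd : a * c = b * d) {f g : ℝ → ℂ}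
    (hf : ∀ t, HasDerivAt f (I * c * g t) t) (hg : ∀ t, HasDerivAt g (I * d * f t) t)
    (t : ℝ) : a * ‖f t‖ ^ 2 + b * ‖g t‖ ^ 2 = a * ‖f 0‖ ^ 2 + b * ‖g 0‖ ^ 2 := by
  set E : ℝ → ℝ := fun s ↦ a * ‖f s‖ ^ 2 + b * ‖g s‖ ^ 2
  have hE : ∀ s, HasDerivAt E 0 s := fun s ↦ by
    refine (((hf s).norm_sq.const_mul a).add ((hg s).norm_sq.const_mul b)).congr_deriv ?_
    rw [mul_comm I, mul_comm I, mul_assoc, mul_assoc, ← real_smul, ← real_smul,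
      real_inner_smul_right, real_inner_smul_right, Complex.real_inner_I_mul_eq_neg (f s)]
    linear_combination -2 * inner ℝ (g s) (I * f s) * hcd
  exact is_const_of_deriv_eq_zero (fun s ↦ (hE s).differentiableAt) (fun s ↦ (hE s).deriv) t 0

theorem sqrt_mul_le_of_weighted_sq_add_eq {a b x y x₀ y₀ : ℝ} (ha : 0 ≤ a) (hb : 0 ≤ b)
    (hx₀ : 0 ≤ x₀) (hy₀ : 0 ≤ y₀) (h : a * x ^ 2 + b * y ^ 2 = a * x₀ ^ 2 + b * y₀ ^ 2) :
    √a * x ≤ √a * x₀ + √b * y₀ := by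
  refine (abs_le_of_sq_le_sq' ?_ (by positivity)).2
  have hy : 0 ≤ b * y ^ 2 := by positivity
  have hcross : 0 ≤ √a * x₀ * (√b * y₀) := by positivity
  simp only [mul_pow, Real.sq_sqrt ha, Real.sq_sqrt hb, add_sq]
  nlinarith

/-- Uniform-in-time stability of the vorticity and temperature Fourier modes for
the inviscid linearized Boussinesq equations about hydrostatic balance (no shear). -/
theorem stmt_3 (α k ξ : ℝ) (hα : 0 < α) (hkξ : 0 < k ^ 2 + ξ ^ 2)
    (f g : ℝ → ℂ) (hf : Differentiable ℝ f) (hg : Differentiable ℝ g)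
    (hf' : ∀ t : ℝ, deriv f t = Complex.I * (k : ℂ) * g t)
    (hg' : ∀ t : ℝ, deriv g t =
      Complex.I * (α : ℂ) * (k : ℂ) / ((k ^ 2 + ξ ^ 2 : ℝ) : ℂ) * f t)
    (f₀ g₀ : ℂ) (hf0 : f 0 = f₀) (hg0 : g 0 = g₀) :
    ∀ t : ℝ,
      ‖f t‖ ≤ ‖f₀‖ + (Real.sqrt (k ^ 2 + ξ ^ 2) / Real.sqrt α) * ‖g₀‖ ∧
      Real.sqrt (k ^ 2 + ξ ^ 2) * ‖g t‖ ≤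
        Real.sqrt α * ‖f₀‖ + Real.sqrt (k ^ 2 + ξ ^ 2) * ‖g₀‖ := by
  intro t
  set K := k ^ 2 + ξ ^ 2
  have hfd : ∀ s, HasDerivAt f (I * k * g s) s := fun s ↦ hf' s ▸ (hf s).hasDerivAt
  have hgd : ∀ s, HasDerivAt g (I * (α * k / K : ℝ) * f s) s := fun s ↦ by
    refine (hg s).hasDerivAt.congr_deriv ?_
    rw [hg' s]
    push_cast
    ring
  have hE := energy_eq_of_hasDerivAt (a := α) (b := K) (mul_div_cancel₀ _ hkξ.ne').symm hfd hgd t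
  rw [hf0, hg0] at hE
  have hsqrtα : 0 < √α := Real.sqrt_pos.mpr hα
  constructor
  · rw [← mul_le_mul_iff_of_pos_left hsqrtα, mul_add, ← mul_assoc, mul_div_cancel₀ _ hsqrtα.ne']
    exact sqrt_mul_le_of_weighted_sq_add_eq hα.le hkξ.le (norm_nonneg _) (norm_nonneg _) hE
  · rw [add_comm (√α * _)]
    rw [add_comm, add_comm (α * _)] at hE
    exact sqrt_mul_le_of_weighted_sq_add_eq hkξ.le hα.le (norm_nonneg _) (norm_nonneg _) hE
end

section
/- Let ηₓ, η_y ≥ 0, k, ξ ∈ ℝ and g₀ ∈ ℂ, and define g(t) = Complex.exp(−ηₓ·k²·t − η_y·∫₀ᵗ (ξ − k·τ)² dτ)·g₀. Then g(0) = g₀, g'(t) = (−ηₓ·k² − η_y·(ξ − k·t)²)·g(t) for all t ∈ ℝ, and for all t ≥ 0 the pointwise decay estimate ‖g(t)‖ ≤ Real.exp(−ηₓ·k²·t − η_y·k²·t³/12)·‖g₀‖ holds. -/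
/-! The exponent is real, so `‖g(t)‖` is `‖g₀‖` times its real exponential, and its derivative
comes from the fundamental theorem of calculus. Decay comes from completing the square:
`∫₀ᵗ (ξ - kτ)² dτ = t (ξ - kt/2)² + k²t³/12 ≥ k²t³/12` for `t ≥ 0`. -/

open intervalIntegral

theorem integral_sq_sub_mul_eq (k ξ t : ℝ) :
    ∫ τ in (0:ℝ)..t, (ξ - k * τ) ^ 2 = t * (ξ - k * t / 2) ^ 2 + k ^ 2 * t ^ 3 / 12 := by
  have hF : ∀ τ ∈ Set.uIcc (0:ℝ) t, HasDerivAt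
      (fun s : ℝ => ξ ^ 2 * s - ξ * k * s ^ 2 + k ^ 2 * s ^ 3 / 3) ((ξ - k * τ) ^ 2) τ := by
    intro τ _
    have h := (((hasDerivAt_id' τ).const_mul (ξ ^ 2)).fun_sub
      ((hasDerivAt_pow 2 τ).const_mul (ξ * k))).fun_add
      (((hasDerivAt_pow 3 τ).const_mul (k ^ 2)).div_const 3)
    exact h.congr_deriv (by norm_num; ring)
  have hint : IntervalIntegrable (fun τ : ℝ => (ξ - k * τ) ^ 2) MeasureTheory.volume 0 t :=
    (by fun_prop : Continuous fun τ : ℝ => (ξ - k * τ) ^ 2).intervalIntegrable _ _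
  rw [integral_eq_sub_of_hasDerivAt hF hint]
  ring

theorem le_integral_sq_sub_mul (k ξ : ℝ) {t : ℝ} (ht : 0 ≤ t) :
    k ^ 2 * t ^ 3 / 12 ≤ ∫ τ in (0:ℝ)..t, (ξ - k * τ) ^ 2 := by
  rw [integral_sq_sub_mul_eq]
  have := mul_nonneg ht (sq_nonneg (ξ - k * t / 2))
  linarith

theorem hasDerivAt_integral_sq_sub_mul (k ξ t : ℝ) :
    HasDerivAt (fun s => ∫ τ in (0:ℝ)..s, (ξ - k * τ) ^ 2) ((ξ - k * t) ^ 2) t :=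
  ((by fun_prop : Continuous fun τ : ℝ => (ξ - k * τ) ^ 2).integral_hasStrictDerivAt 0 t).hasDerivAt

theorem hasDerivAt_cexp_ofReal_mul {φ : ℝ → ℝ} {φ' t : ℝ} (hφ : HasDerivAt φ φ' t) (c : ℂ) :
    HasDerivAt (fun s => Complex.exp (φ s) * c) (φ' * (Complex.exp (φ t) * c)) t :=
  (hφ.ofReal_comp.cexp.mul_const c).congr_deriv (by ring)

theorem norm_cexp_ofReal_mul (x : ℝ) (c : ℂ) :
    ‖Complex.exp x * c‖ = Real.exp x * ‖c‖ := by
  rw [norm_mul, Complex.norm_exp_ofReal]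

theorem stmt_7_general (ηx ηy : ℝ) (hηy : 0 ≤ ηy) (k ξ : ℝ) (g₀ : ℂ)
    (g : ℝ → ℂ)
    (hgdef : ∀ t : ℝ, g t =
      Complex.exp (((-(ηx * k ^ 2 * t) - ηy * ∫ τ in (0:ℝ)..t, (ξ - k * τ) ^ 2 : ℝ) : ℂ)) * g₀) :
    g 0 = g₀ ∧
    (∀ t : ℝ, deriv g t = ((-(ηx * k ^ 2) - ηy * (ξ - k * t) ^ 2 : ℝ) : ℂ) * g t) ∧
    ∀ t : ℝ, 0 ≤ t →
      ‖g t‖ ≤ Real.exp (-(ηx * k ^ 2 * t) - ηy * k ^ 2 * t ^ 3 / 12) * ‖g₀‖ := by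
  obtain rfl : g = _ := funext hgdef
  refine ⟨by simp, fun t => ?_, fun t ht => ?_⟩
  · have hexponent := ((hasDerivAt_id' t).const_mul (ηx * k ^ 2)).neg.fun_sub
      ((hasDerivAt_integral_sq_sub_mul k ξ t).const_mul ηy)
    exact (hasDerivAt_cexp_ofReal_mul (hexponent.congr_deriv (by ring)) g₀).deriv
  · rw [norm_cexp_ofReal_mul]
    have := mul_le_mul_of_nonneg_left (le_integral_sq_sub_mul k ξ ht) hηy
    gcongr
    linarith

/-- Per-Fourier-mode temperature evolution for the linearized Boussinesq equations
(α = 0, β = 1) with partial dissipation: explicit solution and pointwise decay. -/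
theorem stmt_7 (ηx ηy : ℝ) (hηx : 0 ≤ ηx) (hηy : 0 ≤ ηy) (k ξ : ℝ) (g₀ : ℂ)
    (g : ℝ → ℂ)
    (hgdef : ∀ t : ℝ, g t =
      Complex.exp (((-(ηx * k ^ 2 * t) - ηy * ∫ τ in (0:ℝ)..t, (ξ - k * τ) ^ 2 : ℝ) : ℂ)) * g₀) :
    g 0 = g₀ ∧
    (∀ t : ℝ, deriv g t = ((-(ηx * k ^ 2) - ηy * (ξ - k * t) ^ 2 : ℝ) : ℂ) * g t) ∧
    ∀ t : ℝ, 0 ≤ t →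
      ‖g t‖ ≤ Real.exp (-(ηx * k ^ 2 * t) - ηy * k ^ 2 * t ^ 3 / 12) * ‖g₀‖ :=
  stmt_7_general ηx ηy hηy k ξ g₀ g hgdef
end

section
/- Let k ≠ 0, ξ ∈ ℝ, ηₓ, η_y ≥ 0 with ηₓ > 0 or η_y > 0, and f₀, g₀ ∈ ℂ. Define f(t) = f₀ + I·k·g₀·∫₀ᵗ Complex.exp(−ηₓ·k²·s − η_y·∫₀ˢ (ξ − k·τ)² dτ) ds (the solution of the inviscid vorticity mode equation f' = I·k·g forced by g(t) = exp(−ηₓk²t − η_y∫₀ᵗ(ξ−kτ)²dτ)·g₀). Then the improper integral ∫₀^∞ Complex.exp(−ηₓ·k²·s − η_y·∫₀ˢ (ξ − k·τ)² dτ) ds converges, so f_∞ := f₀ + I·k·g₀·∫₀^∞ Complex.exp(−ηₓ·k²·s − η_y·∫₀ˢ (ξ − k·τ)² dτ) ds is well defined, and for every t ≥ 0: ‖f(t) − f_∞‖ ≤ |k|·‖g₀‖·∫ₜ^∞ Real.exp(−ηₓ·k²·s − η_y·k²·s³/12) ds. -/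
/-!
Completing the square in `ξ`, `∫₀ˢ (ξ - kτ)² dτ = s (ξ - ks/2)² + k²s³/12 ≥ k²s³/12` for `s ≥ 0`,
so the integrand of `f` is dominated by `exp (-ηₓk²s - η_y k²s³/12)`. Since `s³ ≥ s - 1` on
`[0, ∞)`, this bound decays at least like `exp (-(ηₓ + η_y/12) k² s)`, hence is integrable, and
`f t - f_∞ = -I k g₀ ∫ₜ^∞ E` is controlled by the tail of the bound.
-/

open MeasureTheory Set

theorem intervalIntegral_sub_mul_sq (ξ k s : ℝ) :
    ∫ τ in (0:ℝ)..s, (ξ - k * τ) ^ 2 = ξ ^ 2 * s - ξ * k * s ^ 2 + k ^ 2 * s ^ 3 / 3 := by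
  have hderiv (τ : ℝ) : HasDerivAt (fun τ : ℝ => ξ ^ 2 * τ - ξ * k * τ ^ 2 + k ^ 2 * τ ^ 3 / 3)
      ((ξ - k * τ) ^ 2) τ := by
    refine HasDerivAt.congr_deriv ?_
      (show ξ ^ 2 * 1 - ξ * k * (2 * τ ^ 1) + k ^ 2 * (3 * τ ^ 2) / 3 = _ by ring)
    exact (((hasDerivAt_id τ).const_mul (ξ ^ 2)).sub ((hasDerivAt_pow 2 τ).const_mul (ξ * k))).add
      (((hasDerivAt_pow 3 τ).const_mul (k ^ 2)).div_const 3)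
  rw [intervalIntegral.integral_eq_sub_of_hasDerivAt (fun τ _ => hderiv τ)
    ((by fun_prop : Continuous fun τ : ℝ => (ξ - k * τ) ^ 2).intervalIntegrable _ _)]
  ring

theorem mul_cube_div_twelve_le_intervalIntegral_sub_mul_sq (ξ k : ℝ) {s : ℝ} (hs : 0 ≤ s) :
    k ^ 2 * s ^ 3 / 12 ≤ ∫ τ in (0:ℝ)..s, (ξ - k * τ) ^ 2 := by
  rw [intervalIntegral_sub_mul_sq]
  nlinarith [mul_nonneg hs (sq_nonneg (ξ - k * s / 2))]

theorem integrableOn_exp_neg_mul_sub_mul_cube {α β : ℝ} (hβ : 0 ≤ β) (hαβ : 0 < α + β) :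
    IntegrableOn (fun s => Real.exp (-(α * s) - β * s ^ 3)) (Ioi 0) := by
  refine ((exp_neg_integrableOn_Ioi 0 hαβ).const_mul (Real.exp β)).mono'
    (by fun_prop : Continuous fun s => Real.exp (-(α * s) - β * s ^ 3)).aestronglyMeasurable ?_
  filter_upwards [ae_restrict_mem measurableSet_Ioi] with s (hs : 0 < s)
  rw [Real.norm_of_nonneg (Real.exp_pos _).le, ← Real.exp_add, Real.exp_le_exp]
  have hcubic : 0 ≤ s ^ 3 - s + 1 := by
    nlinarith [mul_nonneg hs.le (sq_nonneg (s - 1)), sq_nonneg (s - 1), sq_nonneg s]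
  nlinarith [mul_nonneg hβ hcubic]

theorem norm_intervalIntegral_sub_integral_Ioi_le {F : Type*} [NormedAddCommGroup F]
    [NormedSpace ℝ F] {f : ℝ → F} {B : ℝ → ℝ} {a t : ℝ} (hf : IntegrableOn f (Ioi a))
    (hB : IntegrableOn B (Ioi t)) (hfB : ∀ s ∈ Ioi t, ‖f s‖ ≤ B s) (hat : a ≤ t) :
    ‖(∫ s in a..t, f s) - ∫ s in Ioi a, f s‖ ≤ ∫ s in Ioi t, B s := by
  rw [← intervalIntegral.integral_Ioi_sub_Ioi hf hat, sub_sub_cancel_left, norm_neg]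
  exact norm_integral_le_of_norm_le hB ((ae_restrict_iff' measurableSet_Ioi).2 (.of_forall hfB))

/-- Convergence of the vorticity Fourier mode to an asymptotic profile for the
linearized Boussinesq equations (α = 0, β = 1, no viscosity) with thermal
diffusion, together with a quantitative tail estimate. -/
theorem stmt_10 (k ξ ηx ηy : ℝ) (hk : k ≠ 0) (hηx : 0 ≤ ηx) (hηy : 0 ≤ ηy)
    (hpos : 0 < ηx ∨ 0 < ηy) (f₀ g₀ : ℂ)
    (E : ℝ → ℂ)
    (hE : ∀ s : ℝ, E s =
      Complex.exp (((-(ηx * k ^ 2 * s) - ηy * ∫ τ in (0:ℝ)..s, (ξ - k * τ) ^ 2 : ℝ) : ℂ)))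
    (f : ℝ → ℂ)
    (hf : ∀ t : ℝ, f t = f₀ + Complex.I * (k : ℂ) * g₀ * ∫ s in (0:ℝ)..t, E s) :
    MeasureTheory.IntegrableOn E (Set.Ioi 0) ∧
    ∀ t : ℝ, 0 ≤ t →
      ‖f t - (f₀ + Complex.I * (k : ℂ) * g₀ * ∫ s in Set.Ioi (0:ℝ), E s)‖ ≤
        |k| * ‖g₀‖ * ∫ s in Set.Ioi t, Real.exp (-(ηx * k ^ 2 * s) - ηy * k ^ 2 * s ^ 3 / 12) := by
  have hbound (s : ℝ) (hs : 0 ≤ s) :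
      ‖E s‖ ≤ Real.exp (-(ηx * k ^ 2 * s) - ηy * k ^ 2 * s ^ 3 / 12) := by
    rw [hE, Complex.norm_exp_ofReal, Real.exp_le_exp]
    linarith [mul_le_mul_of_nonneg_left
      (mul_cube_div_twelve_le_intervalIntegral_sub_mul_sq ξ k hs) hηy]
  have hB : IntegrableOn (fun s => Real.exp (-(ηx * k ^ 2 * s) - ηy * k ^ 2 * s ^ 3 / 12))
      (Ioi 0) := by
    have hαβ : 0 < ηx * k ^ 2 + ηy * k ^ 2 / 12 := by
      rcases hpos with h | h <;> positivity
    refine (integrableOn_exp_neg_mul_sub_mul_cube (by positivity) hαβ).congr_fun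
      (fun s _ => ?_) measurableSet_Ioi
    ring_nf
  have hcont : Continuous E := by
    rw [show E = _ from funext fun s => by rw [hE, intervalIntegral_sub_mul_sq]]
    fun_prop
  have hEint : IntegrableOn E (Ioi 0) := hB.mono' hcont.aestronglyMeasurable.restrict <| by
    filter_upwards [ae_restrict_mem measurableSet_Ioi] with s (hs : 0 < s)
    exact hbound s hs.le
  refine ⟨hEint, fun t ht => ?_⟩
  calc ‖f t - (f₀ + Complex.I * (k : ℂ) * g₀ * ∫ s in Ioi (0:ℝ), E s)‖
      = |k| * ‖g₀‖ * ‖(∫ s in (0:ℝ)..t, E s) - ∫ s in Ioi (0:ℝ), E s‖ := by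
        rw [hf, add_sub_add_left_eq_sub, ← mul_sub]
        simp [Complex.norm_real]
    _ ≤ _ := by
        gcongr
        exact norm_intervalIntegral_sub_integral_Ioi_le hEint (hB.mono_set (Ioi_subset_Ioi ht))
          (fun s hs => hbound s (ht.trans hs.le)) ht
end

section
/- Let α ∈ ℝ, νₓ, ν_y, ηₓ, η_y ∈ ℝ and k, ξ ∈ ℝ with k² + ξ² > 0. Suppose f, g : ℝ → ℂ are differentiable and satisfy f'(t) = (−νₓ·k² − ν_y·ξ²)·f(t) + I·k·g(t) and g'(t) = (I·α·k/(k² + ξ²))·f(t) + (−ηₓ·k² − η_y·ξ²)·g(t) for all t. Then for all t ∈ ℝ: d/dt [α·‖f(t)‖² + (k² + ξ²)·‖g(t)‖²] = −2·(νₓ·k² + ν_y·ξ²)·α·‖f(t)‖² − 2·(ηₓ·k² + η_y·ξ²)·(k² + ξ²)·‖g(t)‖² (the coupling terms cancel exactly). -/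
/-! Multiplication by `I` is skew-adjoint for the real inner product on `ℂ`, so in
`d/dt (α‖f‖² + (k² + ξ²)‖g‖²)` the contributions of the coupling terms `I k g` and
`I (α k / (k² + ξ²)) f` are `2 α k ⟪f, I g⟫` and `-2 α k ⟪f, I g⟫`. -/

open Complex
open scoped RealInnerProductSpace

theorem Complex.real_inner_I_mul_swap (z w : ℂ) : ⟪w, I * z⟫ = -⟪z, I * w⟫ := by
  simp only [Complex.inner, mul_re, mul_im, conj_re, conj_im, I_re, I_im]
  ring

theorem hasDerivAt_weighted_energy_of_skew_coupling {f g : ℝ → ℂ} {a b p q A B t : ℝ}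
    (hf : HasDerivAt f ((a : ℂ) * f t + I * p * g t) t)
    (hg : HasDerivAt g (I * q * f t + (b : ℂ) * g t) t) (hpq : A * p = B * q) :
    HasDerivAt (fun s => A * ‖f s‖ ^ 2 + B * ‖g s‖ ^ 2)
      (2 * a * A * ‖f t‖ ^ 2 + 2 * b * B * ‖g t‖ ^ 2) t := by
  refine ((hf.norm_sq.const_mul A).add (hg.norm_sq.const_mul B)).congr_deriv ?_
  have hfg : ⟪f t, I * p * g t⟫ = p * ⟪f t, I * g t⟫ := by
    rw [mul_comm I, mul_assoc, ← real_smul, real_inner_smul_right]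
  have hgf : ⟪g t, I * q * f t⟫ = -(q * ⟪f t, I * g t⟫) := by
    rw [mul_comm I, mul_assoc, ← real_smul, real_inner_smul_right, real_inner_I_mul_swap,
      mul_neg]
  rw [inner_add_right, inner_add_right, hfg, hgf, ← real_smul, ← real_smul,
    real_inner_smul_right, real_inner_smul_right, real_inner_self_eq_norm_sq,
    real_inner_self_eq_norm_sq]
  linear_combination (2 * ⟪f t, I * g t⟫) * hpq

/-- Exact cancellation of the coupling terms in the weighted energy identity for
the per-Fourier-mode linearized Boussinesq equations about hydrostatic balance
(no shear) with partial dissipation. -/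
theorem stmt_11 (α νx νy ηx ηy k ξ : ℝ) (hkξ : 0 < k ^ 2 + ξ ^ 2)
    (f g : ℝ → ℂ) (hf : Differentiable ℝ f) (hg : Differentiable ℝ g)
    (hf' : ∀ t : ℝ, deriv f t =
      ((-(νx * k ^ 2) - νy * ξ ^ 2 : ℝ) : ℂ) * f t + Complex.I * (k : ℂ) * g t)
    (hg' : ∀ t : ℝ, deriv g t =
      Complex.I * (α : ℂ) * (k : ℂ) / ((k ^ 2 + ξ ^ 2 : ℝ) : ℂ) * f t +
      ((-(ηx * k ^ 2) - ηy * ξ ^ 2 : ℝ) : ℂ) * g t) :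
    ∀ t : ℝ,
      deriv (fun s : ℝ => α * ‖f s‖ ^ 2 + (k ^ 2 + ξ ^ 2) * ‖g s‖ ^ 2) t =
        -2 * (νx * k ^ 2 + νy * ξ ^ 2) * α * ‖f t‖ ^ 2
        - 2 * (ηx * k ^ 2 + ηy * ξ ^ 2) * (k ^ 2 + ξ ^ 2) * ‖g t‖ ^ 2 := by
  intro t
  have hK : k ^ 2 + ξ ^ 2 ≠ 0 := hkξ.ne'
  have hcoupling : I * (α : ℂ) * (k : ℂ) / ((k ^ 2 + ξ ^ 2 : ℝ) : ℂ) =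
      I * ((α * k / (k ^ 2 + ξ ^ 2) : ℝ) : ℂ) := by
    push_cast
    ring
  have hE := hasDerivAt_weighted_energy_of_skew_coupling (A := α) (B := k ^ 2 + ξ ^ 2)
    (hf' t ▸ (hf t).hasDerivAt) (hcoupling ▸ hg' t ▸ (hg t).hasDerivAt) (by field_simp)
  rw [hE.deriv]
  ring
end

section
/- Let α, νₓ, ν_y, ηₓ, η_y ∈ ℝ and k, ξ ∈ ℝ with k ≠ 0 and k² + ξ² > 0, and let M be the complex 2×2 matrix with entries M₀₀ = −νₓ·k² − ν_y·ξ², M₀₁ = I·k, M₁₀ = I·α·k/(k² + ξ²), M₁₁ = −ηₓ·k² − η_y·ξ². Assume α > α* := ((k² + ξ²)/k²)·(((ηₓ − νₓ)/2)·k² + ((η_y − ν_y)/2)·ξ²)². Then every λ ∈ ℂ with Matrix.det (M − λ·1) = 0 satisfies Complex.re λ = −((ηₓ + νₓ)/2)·k² − ((η_y + ν_y)/2)·ξ². -/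
/-!
The characteristic polynomial of `M` is `(λ - a)(λ - d) + α k² / (k² + ξ²)` with `a = M₀₀`,
`d = M₁₁` real. Its discriminant is `((a - d)/2)² - α k² / (k² + ξ²)`, and `α > α*` says exactly
that it is negative, so both roots are `(a + d)/2 ± i·√(...)`.
-/

lemma Matrix.det_fin_two_sub_smul_one {R : Type*} [CommRing R]
    (M : Matrix (Fin 2) (Fin 2) R) (l : R) :
    (M - l • (1 : Matrix (Fin 2) (Fin 2) R)).det
      = (l - M 0 0) * (l - M 1 1) - M 0 1 * M 1 0 := by
  rw [Matrix.det_fin_two]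
  simp only [Matrix.sub_apply, Matrix.smul_apply, Matrix.one_apply_eq,
    Matrix.one_apply_ne zero_ne_one, Matrix.one_apply_ne one_ne_zero, smul_eq_mul]
  ring

lemma Complex.re_eq_zero_of_sq_eq_ofReal_neg {w : ℂ} {D : ℝ} (hD : D < 0)
    (hw : w ^ 2 = D) : w.re = 0 := by
  have him : w.re * w.im = 0 := by
    have := congrArg Complex.im hw
    simp only [pow_two, Complex.mul_im, Complex.ofReal_im] at this
    linarith
  have hre : w.re ^ 2 - w.im ^ 2 = D := by
    have := congrArg Complex.re hw
    simpa only [pow_two, Complex.mul_re, Complex.ofReal_re] using this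
  rcases mul_eq_zero.mp him with h | h
  · exact h
  · rw [h] at hre
    nlinarith [sq_nonneg w.re]

lemma Complex.re_eq_of_mul_sub_add_eq_zero_of_discrim_neg {a d q : ℝ}
    (hq : ((a - d) / 2) ^ 2 < q) {l : ℂ} (hl : (l - a) * (l - d) + q = 0) : l.re = (a + d) / 2 := by
  have hsq : (l - ((a + d) / 2 : ℝ)) ^ 2 = (((a - d) / 2) ^ 2 - q : ℝ) := by
    push_cast
    linear_combination hl
  have := Complex.re_eq_zero_of_sq_eq_ofReal_neg (by linarith) hsq
  simpa [sub_eq_zero] using this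

theorem stmt_14_general (α νx νy ηx ηy k ξ : ℝ) (hk : k ≠ 0)
    (M : Matrix (Fin 2) (Fin 2) ℂ)
    (hM : M = !![((-(νx * k ^ 2) - νy * ξ ^ 2 : ℝ) : ℂ), Complex.I * (k : ℂ);
      Complex.I * (α : ℂ) * (k : ℂ) / ((k ^ 2 + ξ ^ 2 : ℝ) : ℂ),
      ((-(ηx * k ^ 2) - ηy * ξ ^ 2 : ℝ) : ℂ)])
    (hα : α > ((k ^ 2 + ξ ^ 2) / k ^ 2) *
      (((ηx - νx) / 2) * k ^ 2 + ((ηy - νy) / 2) * ξ ^ 2) ^ 2) :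
    ∀ l : ℂ, Matrix.det (M - l • (1 : Matrix (Fin 2) (Fin 2) ℂ)) = 0 →
      l.re = -((ηx + νx) / 2) * k ^ 2 - ((ηy + νy) / 2) * ξ ^ 2 := by
  intro l hdet
  set a : ℝ := -(νx * k ^ 2) - νy * ξ ^ 2 with ha
  set d : ℝ := -(ηx * k ^ 2) - ηy * ξ ^ 2 with hd
  have hk2 : 0 < k ^ 2 := by positivity
  have hc : 0 < k ^ 2 + ξ ^ 2 := by positivity
  have hdisc : ((a - d) / 2) ^ 2 < α * k ^ 2 / (k ^ 2 + ξ ^ 2) := by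
    have hS : (a - d) / 2 = ((ηx - νx) / 2) * k ^ 2 + ((ηy - νy) / 2) * ξ ^ 2 := by
      rw [ha, hd]; ring
    rw [lt_div_iff₀ hc, hS]
    rw [gt_iff_lt, div_mul_eq_mul_div, div_lt_iff₀ hk2] at hα
    linear_combination hα
  have hchar : (l - a) * (l - d) + ((α * k ^ 2 / (k ^ 2 + ξ ^ 2) : ℝ) : ℂ) = 0 := by
    rw [Matrix.det_fin_two_sub_smul_one, hM] at hdet
    simp only [Matrix.of_apply, Matrix.cons_val', Matrix.cons_val_zero, Matrix.cons_val_one,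
      Matrix.empty_val', Matrix.cons_val_fin_one] at hdet
    rw [← hdet]
    have hcC : ((k ^ 2 + ξ ^ 2 : ℝ) : ℂ) ≠ 0 := by exact_mod_cast hc.ne'
    push_cast at hcC ⊢
    field_simp
    linear_combination (α * k ^ 2 : ℂ) * Complex.I_sq
  rw [Complex.re_eq_of_mul_sub_add_eq_zero_of_discrim_neg hdisc hchar]
  ring

/-- Above the critical balance slope α*, every eigenvalue of the Fourier-mode
coefficient matrix has real part equal to the mean dissipation rate. -/
theorem stmt_14 (α νx νy ηx ηy k ξ : ℝ) (hk : k ≠ 0) (hkξ : 0 < k ^ 2 + ξ ^ 2)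
    (M : Matrix (Fin 2) (Fin 2) ℂ)
    (hM : M = !![((-(νx * k ^ 2) - νy * ξ ^ 2 : ℝ) : ℂ), Complex.I * (k : ℂ);
      Complex.I * (α : ℂ) * (k : ℂ) / ((k ^ 2 + ξ ^ 2 : ℝ) : ℂ),
      ((-(ηx * k ^ 2) - ηy * ξ ^ 2 : ℝ) : ℂ)])
    (hα : α > ((k ^ 2 + ξ ^ 2) / k ^ 2) *
      (((ηx - νx) / 2) * k ^ 2 + ((ηy - νy) / 2) * ξ ^ 2) ^ 2) :
    ∀ l : ℂ, Matrix.det (M - l • (1 : Matrix (Fin 2) (Fin 2) ℂ)) = 0 →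
      l.re = -((ηx + νx) / 2) * k ^ 2 - ((ηy + νy) / 2) * ξ ^ 2 :=
  stmt_14_general α νx νy ηx ηy k ξ hk M hM hα
end

section
/- Let νₓ, ν_y, ηₓ, η_y ≥ 0 and k, ξ ∈ ℝ with k ≠ 0 and k² + ξ² > 0, and let M be the complex 2×2 matrix with entries M₀₀ = −νₓ·k² − ν_y·ξ², M₀₁ = I·k, M₁₀ = I·α·k/(k² + ξ²), M₁₁ = −ηₓ·k² − η_y·ξ². Assume 0 < α < α* := ((k² + ξ²)/k²)·(((ηₓ − νₓ)/2)·k² + ((η_y − ν_y)/2)·ξ²)². Then M has exactly two eigenvalues, both are real and distinct, and every λ ∈ ℂ with Matrix.det (M − λ·1) = 0 satisfies Complex.im λ = 0 and Complex.re λ < −(min νₓ ηₓ·k² + min ν_y η_y·ξ²) ≤ 0; in particular both eigenvalues are strictly negative. -/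
/-!
Writing `a = νx k² + νy ξ²`, `b = ηx k² + ηy ξ²` and `c = α k² / (k² + ξ²)`, the characteristic
polynomial of `M` is `(λ + a)(λ + b) + c`, whose discriminant `(a - b)² - 4c` is positive exactly
when `α < α*`. Its two real roots are `(-(a + b) ± s) / 2` with `s = √((a - b)² - 4c)`, and for
`m ≤ a, b` the identity `(a + b - 2m)² - (a - b)² = 4 (a - m)(b - m)` together with `c > 0` gives
`s < a + b - 2m`, i.e. both roots lie strictly below `-m`.
-/

open Complex

theorem Matrix.det_sub_smul_one_fin_two {R : Type*} [CommRing R] (A : Matrix (Fin 2) (Fin 2) R)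
    (l : R) : (A - l • 1).det = (l - A 0 0) * (l - A 1 1) - A 0 1 * A 1 0 := by
  simp only [Matrix.det_fin_two, Matrix.sub_apply, Matrix.smul_apply, Matrix.one_apply_eq,
    Matrix.one_apply_ne zero_ne_one, Matrix.one_apply_ne one_ne_zero, smul_eq_mul]
  ring

section QuadraticRoots

variable {a b c s : ℝ}

theorem add_mul_add_add_eq_mul_sub_roots (hs : s ^ 2 = (a - b) ^ 2 - 4 * c) (z : ℂ) :
    (z + a) * (z + b) + c =
      (z - ((-(a + b) - s) / 2 : ℝ)) * (z - ((-(a + b) + s) / 2 : ℝ)) := by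
  have hsC : (s : ℂ) ^ 2 = ((a : ℂ) - b) ^ 2 - 4 * c := by exact_mod_cast hs
  push_cast
  linear_combination (1 / 4 : ℂ) * hsC

theorem larger_root_lt_neg {m : ℝ} (hma : m ≤ a) (hmb : m ≤ b) (hc : 0 < c) (hs0 : 0 ≤ s)
    (hs : s ^ 2 = (a - b) ^ 2 - 4 * c) : (-(a + b) + s) / 2 < -m := by
  have hsq : s ^ 2 < (a + b - 2 * m) ^ 2 := by
    nlinarith [mul_nonneg (sub_nonneg.2 hma) (sub_nonneg.2 hmb)]
  nlinarith

end QuadraticRoots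

/-- Below the critical balance slope α*, the Fourier-mode coefficient matrix has
exactly two eigenvalues, both real, distinct and strictly negative. -/
theorem stmt_15 (α νx νy ηx ηy k ξ : ℝ)
    (hνx : 0 ≤ νx) (hνy : 0 ≤ νy) (hηx : 0 ≤ ηx) (hηy : 0 ≤ ηy)
    (hk : k ≠ 0) (hkξ : 0 < k ^ 2 + ξ ^ 2)
    (M : Matrix (Fin 2) (Fin 2) ℂ)
    (hM : M = !![((-(νx * k ^ 2) - νy * ξ ^ 2 : ℝ) : ℂ), Complex.I * (k : ℂ);
      Complex.I * (α : ℂ) * (k : ℂ) / ((k ^ 2 + ξ ^ 2 : ℝ) : ℂ),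
      ((-(ηx * k ^ 2) - ηy * ξ ^ 2 : ℝ) : ℂ)])
    (hα0 : 0 < α)
    (hα : α < ((k ^ 2 + ξ ^ 2) / k ^ 2) *
      (((ηx - νx) / 2) * k ^ 2 + ((ηy - νy) / 2) * ξ ^ 2) ^ 2) :
    (∃ l₁ l₂ : ℝ, l₁ ≠ l₂ ∧
      ∀ l : ℂ, Matrix.det (M - l • (1 : Matrix (Fin 2) (Fin 2) ℂ)) = 0 ↔
        (l = (l₁ : ℂ) ∨ l = (l₂ : ℂ))) ∧
    (∀ l : ℂ, Matrix.det (M - l • (1 : Matrix (Fin 2) (Fin 2) ℂ)) = 0 →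
      l.im = 0 ∧ l.re < -(min νx ηx * k ^ 2 + min νy ηy * ξ ^ 2)) ∧
    -(min νx ηx * k ^ 2 + min νy ηy * ξ ^ 2) ≤ 0 := by
  set a := νx * k ^ 2 + νy * ξ ^ 2
  set b := ηx * k ^ 2 + ηy * ξ ^ 2
  set m := min νx ηx * k ^ 2 + min νy ηy * ξ ^ 2
  set c := α * k ^ 2 / (k ^ 2 + ξ ^ 2)
  have hk2 : 0 < k ^ 2 := by positivity
  have hc : 0 < c := by positivity
  have hdisc : 0 < (a - b) ^ 2 - 4 * c := by
    rw [div_mul_eq_mul_div, lt_div_iff₀ hk2] at hα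
    have : c < ((a - b) / 2) ^ 2 := by
      rw [div_lt_iff₀ hkξ]; linear_combination hα
    linarith
  set s := √((a - b) ^ 2 - 4 * c)
  have hs : s ^ 2 = (a - b) ^ 2 - 4 * c := Real.sq_sqrt hdisc.le
  have hs0 : 0 < s := Real.sqrt_pos.2 hdisc
  have hma : m ≤ a := by unfold m a; gcongr <;> exact min_le_left _ _
  have hmb : m ≤ b := by unfold m b; gcongr <;> exact min_le_right _ _
  have hcharpoly (l : ℂ) :
      (M - l • 1).det = (l + a) * (l + b) + c := by
    have hK : ((k ^ 2 + ξ ^ 2 : ℝ) : ℂ) ≠ 0 := by exact_mod_cast hkξ.ne'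
    rw [Matrix.det_sub_smul_one_fin_two, hM]
    simp only [Matrix.of_apply, Matrix.cons_val', Matrix.cons_val_zero, Matrix.cons_val_one,
      Matrix.empty_val', Matrix.cons_val_fin_one, a, b, c]
    push_cast at hK ⊢
    field_simp
    linear_combination (-(α : ℂ) * k ^ 2) * Complex.I_sq
  have hroots (l : ℂ) : (M - l • 1).det = 0 ↔
      l = ((-(a + b) - s) / 2 : ℝ) ∨ l = ((-(a + b) + s) / 2 : ℝ) := by
    rw [hcharpoly, add_mul_add_add_eq_mul_sub_roots hs, mul_eq_zero, sub_eq_zero, sub_eq_zero]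
  have hlarger := larger_root_lt_neg hma hmb hc hs0.le hs
  refine ⟨⟨_, _, by linarith, hroots⟩, fun l hl ↦ ?_, ?_⟩
  · rcases (hroots l).1 hl with rfl | rfl <;>
      exact ⟨ofReal_im _, by rw [ofReal_re]; linarith⟩
  · have : 0 ≤ m := by have := le_min hνx hηx; have := le_min hνy hηy; positivity
    linarith
end

section
/- Let α, νₓ, ν_y, ηₓ, η_y ∈ ℝ, k, ξ ∈ ℝ with k ≠ 0. Suppose f, g : ℝ → ℂ are differentiable and satisfy f'(t) = (−νₓ·k² − ν_y·(ξ − k·t)²)·f(t) + I·k·g(t) and g'(t) = (I·α·k/(k² + (ξ − k·t)²))·f(t) + (−ηₓ·k² − η_y·(ξ − k·t)²)·g(t) for all t. Then for all t ∈ ℝ: d/dt [α·‖f(t)‖² + (k² + (ξ − k·t)²)·‖g(t)‖²] = −2·(νₓ·k² + ν_y·(ξ − k·t)²)·α·‖f(t)‖² + (−2·ηₓ·k² − 2·η_y·(ξ − k·t)²)·(k² + (ξ − k·t)²)·‖g(t)‖² + 2·k·(k·t − ξ)·‖g(t)‖² (the coupling terms cancel exactly and only the time-dependence of the weight k² + (ξ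 − kt)² contributes the last term). -/
/-!
Differentiating the energy, each damping term contributes twice its coefficient times its own
energy, and the weight `w = k² + (ξ - kt)²` contributes `w' ‖g‖²`. The coupling terms are
`2αk ⟪f, I g⟫` and `w · 2(αk / w) ⟪g, I f⟫`; the weight `w` in front of `‖g‖²` is chosen exactly
so that they have the same coefficient, and `⟪f, I g⟫ = -⟪g, I f⟫` because multiplication
by `I` is skew-adjoint on `ℂ ≅ ℝ²`.
-/

open Complex
open scoped InnerProductSpace

theorem Complex.inner_I_mul_add_inner_I_mul (z w : ℂ) :
    ⟪z, I * w⟫_ℝ + ⟪w, I * z⟫_ℝ = 0 := by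
  simp only [Complex.inner, mul_re, mul_im, conj_re, conj_im, I_re, I_im]
  ring

theorem Complex.inner_ofReal_mul_right (r : ℝ) (z w : ℂ) :
    ⟪z, (r : ℂ) * w⟫_ℝ = r * ⟪z, w⟫_ℝ := by
  rw [← real_smul, real_inner_smul_right]

theorem hasDerivAt_weighted_energy {f g : ℝ → ℂ} {w : ℝ → ℝ} {α k a b w' t : ℝ}
    (hf : HasDerivAt f ((a : ℂ) * f t + I * k * g t) t)
    (hg : HasDerivAt g (I * α * k / (w t : ℂ) * f t + (b : ℂ) * g t) t)
    (hw : HasDerivAt w w' t) (hw0 : w t ≠ 0) :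
    HasDerivAt (fun s => α * ‖f s‖ ^ 2 + w s * ‖g s‖ ^ 2)
      (2 * a * α * ‖f t‖ ^ 2 + (2 * b * w t + w') * ‖g t‖ ^ 2) t := by
  refine ((hf.norm_sq.const_mul α).add (hw.mul hg.norm_sq)).congr_deriv ?_
  have hcoupling_f : I * k * g t = (k : ℂ) * (I * g t) := by ring
  have hcoupling_g : I * α * k / (w t : ℂ) * f t = ((α * k / w t : ℝ) : ℂ) * (I * f t) := by
    push_cast; ring
  have hcancel := Complex.inner_I_mul_add_inner_I_mul (f t) (g t)
  simp only [hcoupling_f, hcoupling_g, inner_add_right, Complex.inner_ofReal_mul_right,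
    real_inner_self_eq_norm_sq]
  field_simp
  linear_combination (2 * α * k) * hcancel

/-- Weighted energy identity for the per-Fourier-mode linearized Boussinesq
equations about combined shear (β = 1) and hydrostatic balance, in coordinates
moving with the shear: the coupling terms cancel exactly and only the
time-dependence of the weight k² + (ξ − kt)² contributes the last term. -/
theorem stmt_16 (α νx νy ηx ηy k ξ : ℝ) (hk : k ≠ 0)
    (f g : ℝ → ℂ) (hf : Differentiable ℝ f) (hg : Differentiable ℝ g)
    (hf' : ∀ t : ℝ, deriv f t =
      ((-(νx * k ^ 2) - νy * (ξ - k * t) ^ 2 : ℝ) : ℂ) * f t + Complex.I * (k : ℂ) * g t)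
    (hg' : ∀ t : ℝ, deriv g t =
      Complex.I * (α : ℂ) * (k : ℂ) / ((k ^ 2 + (ξ - k * t) ^ 2 : ℝ) : ℂ) * f t +
      ((-(ηx * k ^ 2) - ηy * (ξ - k * t) ^ 2 : ℝ) : ℂ) * g t) :
    ∀ t : ℝ,
      deriv (fun s : ℝ => α * ‖f s‖ ^ 2 + (k ^ 2 + (ξ - k * s) ^ 2) * ‖g s‖ ^ 2) t =
        -2 * (νx * k ^ 2 + νy * (ξ - k * t) ^ 2) * α * ‖f t‖ ^ 2
        + (-2 * ηx * k ^ 2 - 2 * ηy * (ξ - k * t) ^ 2) * (k ^ 2 + (ξ - k * t) ^ 2) * ‖g t‖ ^ 2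
        + 2 * k * (k * t - ξ) * ‖g t‖ ^ 2 := by
  intro t
  have hweight : HasDerivAt (fun s : ℝ => k ^ 2 + (ξ - k * s) ^ 2) (2 * k * (k * t - ξ)) t := by
    have hshear := ((hasDerivAt_id' t).const_mul k).const_sub ξ
    exact ((hshear.pow 2).const_add (k ^ 2)).congr_deriv (by ring)
  have hweight_ne : k ^ 2 + (ξ - k * t) ^ 2 ≠ 0 := by positivity
  have henergy := hasDerivAt_weighted_energy (hf' t ▸ (hf t).hasDerivAt)
    (hg' t ▸ (hg t).hasDerivAt) hweight hweight_ne
  rw [henergy.deriv]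
  ring
end

section
/- Let α ≥ 0, νₓ, ν_y, ηₓ, η_y ≥ 0, k > 0 and ξ ≥ 0. Suppose f, g : ℝ → ℂ are differentiable and satisfy f'(t) = (−νₓ·k² − ν_y·(ξ − k·t)²)·f(t) + I·k·g(t) and g'(t) = (I·α·k/(k² + (ξ − k·t)²))·f(t) + (−ηₓ·k² − η_y·(ξ − k·t)²)·g(t) for all t. Then for all T ≥ 0: α·‖f(T)‖² + (k² + (ξ − k·T)²)·‖g(T)‖² ≤ (1 + T²)·Real.exp(−2·min νₓ ηₓ·k²·T − min ν_y η_y·k²·T³/6)·(α·‖f(0)‖² + (k² + ξ²)·‖g(0)‖²). -/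
/-!
With `a(t) = k² + (ξ - kt)²`, the energy `E = α‖f‖² + a‖g‖²` is the one in which the two
coupling terms `ik g` and `iαk/a f` cancel, so `E' = (dissipation) + a'‖g‖²`. Bounding the
dissipation below by `2(μₓk² + μ_y(ξ - kt)²)E` with `μ = min(ν, η)` gives
`E' + φE ≤ a'‖g‖²`, `φ(t) = 2(μₓk² + μ_y(ξ - kt)²)`. Before the critical time `ξ/k` the
symbol `a` decreases and `e^Φ E` is nonincreasing (`Φ' = φ`); after it, `a'‖g‖² ≤ (a'/a)E`
and `e^Φ E / a` is nonincreasing. Since `a(T) ≤ (1 + T²)k²` and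
`Φ(T) ≥ 2μₓk²T + μ_y k²T³/6` (the minimum over `ξ` of `∫₀ᵀ (ξ - ks)² ds` is `k²T³/12`),
the estimate follows.
-/

open Real Set

theorem antitoneOn_exp_mul_of_deriv_add_mul_nonpos {D : Set ℝ} (hD : Convex ℝ D)
    {F F' Φ φ : ℝ → ℝ} (hF : ∀ t, HasDerivAt F (F' t) t) (hΦ : ∀ t, HasDerivAt Φ (φ t) t)
    (h : ∀ t ∈ interior D, F' t + φ t * F t ≤ 0) :
    AntitoneOn (fun t => exp (Φ t) * F t) D := by
  have hG (t : ℝ) :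
      HasDerivAt (fun s => exp (Φ s) * F s) (exp (Φ t) * (F' t + φ t * F t)) t :=
    ((hΦ t).exp.mul (hF t)).congr_deriv (by ring)
  exact antitoneOn_of_hasDerivWithinAt_nonpos hD
    (fun t _ => (hG t).continuousAt.continuousWithinAt) (fun t _ => (hG t).hasDerivWithinAt)
    fun t ht => mul_nonpos_of_nonneg_of_nonpos (exp_pos _).le (h t ht)

-- The coupling terms cancel because `g` is weighted by `a` exactly where its coupling
-- coefficient is divided by `a`.
theorem hasDerivAt_energy_of_skew_coupling {f g : ℝ → ℂ} {a : ℝ → ℝ} {c d α k a' t : ℝ}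
    (hf : HasDerivAt f ((c : ℂ) * f t + Complex.I * k * g t) t)
    (hg : HasDerivAt g (Complex.I * α * k / (a t : ℂ) * f t + (d : ℂ) * g t) t)
    (ha : HasDerivAt a a' t) (ha₀ : a t ≠ 0) :
    HasDerivAt (fun s => α * ‖f s‖ ^ 2 + a s * ‖g s‖ ^ 2)
      (2 * c * (α * ‖f t‖ ^ 2) + a' * ‖g t‖ ^ 2 + 2 * d * (a t * ‖g t‖ ^ 2)) t := by
  refine ((hf.norm_sq.const_mul α).add (ha.mul hg.norm_sq)).congr_deriv ?_
  simp only [Complex.inner, Complex.sq_norm, Complex.normSq_apply, Complex.add_re,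
    Complex.add_im, Complex.mul_re, Complex.mul_im, Complex.div_ofReal_re, Complex.div_ofReal_im,
    Complex.conj_re, Complex.conj_im, Complex.ofReal_re, Complex.ofReal_im, Complex.I_re,
    Complex.I_im]
  field_simp
  ring

noncomputable def shearSymbol (k ξ t : ℝ) : ℝ := k ^ 2 + (ξ - k * t) ^ 2

-- The antiderivative of `2 (μx k² + μy (ξ - k t)²)` vanishing at `0`.
noncomputable def mixingWeight (μx μy k ξ t : ℝ) : ℝ :=
  2 * μx * k ^ 2 * t + 2 * μy * (ξ ^ 2 * t - ξ * k * t ^ 2 + k ^ 2 * t ^ 3 / 3)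

noncomputable def modeEnergy (α k ξ : ℝ) (f g : ℝ → ℂ) (t : ℝ) : ℝ :=
  α * ‖f t‖ ^ 2 + shearSymbol k ξ t * ‖g t‖ ^ 2

def IsShearedBoussinesqMode (α νx νy ηx ηy k ξ : ℝ) (f g : ℝ → ℂ) : Prop :=
  ∀ t, HasDerivAt f (((-(νx * k ^ 2) - νy * (ξ - k * t) ^ 2 : ℝ) : ℂ) * f t +
      Complex.I * k * g t) t ∧
    HasDerivAt g (Complex.I * α * k / (shearSymbol k ξ t : ℂ) * f t +
      ((-(ηx * k ^ 2) - ηy * (ξ - k * t) ^ 2 : ℝ) : ℂ) * g t) t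

theorem shearSymbol_pos {k : ℝ} (hk : k ≠ 0) (ξ t : ℝ) : 0 < shearSymbol k ξ t := by
  unfold shearSymbol; positivity

theorem shearSymbol_div_self {k : ℝ} (hk : k ≠ 0) (ξ : ℝ) : shearSymbol k ξ (ξ / k) = k ^ 2 := by
  simp [shearSymbol, mul_div_cancel₀ ξ hk]

theorem hasDerivAt_shearSymbol (k ξ t : ℝ) :
    HasDerivAt (shearSymbol k ξ) (-2 * k * (ξ - k * t)) t := by
  have hp : HasDerivAt (fun s => ξ - k * s) (-k) t := by
    simpa using ((hasDerivAt_id t).const_mul k).const_sub ξ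
  exact ((hp.pow 2).const_add (k ^ 2)).congr_deriv (by ring)

theorem hasDerivAt_mixingWeight (μx μy k ξ t : ℝ) :
    HasDerivAt (mixingWeight μx μy k ξ) (2 * (μx * k ^ 2 + μy * (ξ - k * t) ^ 2)) t := by
  have h := ((hasDerivAt_id t).const_mul (2 * μx * k ^ 2)).add
    ((((hasDerivAt_id t).const_mul (ξ ^ 2)).sub ((hasDerivAt_pow 2 t).const_mul (ξ * k))).add
      (((hasDerivAt_pow 3 t).const_mul (k ^ 2)).div_const 3) |>.const_mul (2 * μy))
  exact h.congr_deriv (by ring)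

theorem le_mixingWeight {μy T : ℝ} (hμy : 0 ≤ μy) (hT : 0 ≤ T) (μx k ξ : ℝ) :
    2 * μx * k ^ 2 * T + μy * k ^ 2 * T ^ 3 / 6 ≤ mixingWeight μx μy k ξ T := by
  unfold mixingWeight
  nlinarith [mul_nonneg (mul_nonneg hμy hT) (sq_nonneg (2 * ξ - k * T))]

theorem mixingWeight_zero (μx μy k ξ : ℝ) : mixingWeight μx μy k ξ 0 = 0 := by
  simp [mixingWeight]

theorem modeEnergy_nonneg {α : ℝ} (hα : 0 ≤ α) (k ξ : ℝ) (f g : ℝ → ℂ) (t : ℝ) :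
    0 ≤ modeEnergy α k ξ f g t := by
  unfold modeEnergy shearSymbol; positivity

section ShearedBoussinesqMode

variable {α νx νy ηx ηy k ξ : ℝ} {f g : ℝ → ℂ}

theorem IsShearedBoussinesqMode.exists_hasDerivAt_modeEnergy_le
    (h : IsShearedBoussinesqMode α νx νy ηx ηy k ξ f g) (hα : 0 ≤ α) (hk : k ≠ 0) (t : ℝ) :
    ∃ E', HasDerivAt (modeEnergy α k ξ f g) E' t ∧
      E' + 2 * (min νx ηx * k ^ 2 + min νy ηy * (ξ - k * t) ^ 2) * modeEnergy α k ξ f g t ≤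
        -2 * k * (ξ - k * t) * ‖g t‖ ^ 2 := by
  refine ⟨_, hasDerivAt_energy_of_skew_coupling (h t).1 (h t).2 (hasDerivAt_shearSymbol k ξ t)
    (shearSymbol_pos hk ξ t).ne', ?_⟩
  have hx₁ := min_le_left νx ηx
  have hx₂ := min_le_right νx ηx
  have hy₁ := min_le_left νy ηy
  have hy₂ := min_le_right νy ηy
  have hF : 0 ≤ α * ‖f t‖ ^ 2 := by positivity
  have hG : 0 ≤ shearSymbol k ξ t * ‖g t‖ ^ 2 := by
    have := shearSymbol_pos hk ξ t; positivity
  unfold modeEnergy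
  nlinarith [mul_nonneg (mul_nonneg (sub_nonneg.2 hx₁) (sq_nonneg k)) hF,
    mul_nonneg (mul_nonneg (sub_nonneg.2 hy₁) (sq_nonneg (ξ - k * t))) hF,
    mul_nonneg (mul_nonneg (sub_nonneg.2 hx₂) (sq_nonneg k)) hG,
    mul_nonneg (mul_nonneg (sub_nonneg.2 hy₂) (sq_nonneg (ξ - k * t))) hG]

theorem IsShearedBoussinesqMode.antitoneOn_exp_mixingWeight_mul_modeEnergy
    (h : IsShearedBoussinesqMode α νx νy ηx ηy k ξ f g) (hα : 0 ≤ α) (hk : 0 < k) :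
    AntitoneOn (fun t => exp (mixingWeight (min νx ηx) (min νy ηy) k ξ t) *
      modeEnergy α k ξ f g t) (Iic (ξ / k)) := by
  choose E' hE' hle using h.exists_hasDerivAt_modeEnergy_le hα hk.ne'
  refine antitoneOn_exp_mul_of_deriv_add_mul_nonpos (convex_Iic _) hE'
    (hasDerivAt_mixingWeight _ _ k ξ) fun t ht => (hle t).trans ?_
  rw [interior_Iic, mem_Iio, lt_div_iff₀ hk] at ht
  have : 0 ≤ k * (ξ - k * t) := by nlinarith
  nlinarith [sq_nonneg ‖g t‖]

theorem IsShearedBoussinesqMode.antitoneOn_exp_mixingWeight_mul_modeEnergy_div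
    (h : IsShearedBoussinesqMode α νx νy ηx ηy k ξ f g) (hα : 0 ≤ α) (hk : 0 < k) :
    AntitoneOn (fun t => exp (mixingWeight (min νx ηx) (min νy ηy) k ξ t -
      log (shearSymbol k ξ t)) * modeEnergy α k ξ f g t) (Ici (ξ / k)) := by
  choose E' hE' hle using h.exists_hasDerivAt_modeEnergy_le hα hk.ne'
  have ha := shearSymbol_pos hk.ne' ξ
  refine antitoneOn_exp_mul_of_deriv_add_mul_nonpos (convex_Ici _) hE'
    (fun t => (hasDerivAt_mixingWeight _ _ k ξ t).sub
      ((hasDerivAt_shearSymbol k ξ t).log (ha t).ne')) fun t ht => ?_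
  rw [interior_Ici, mem_Ioi, div_lt_iff₀ hk] at ht
  have hp : k * (ξ - k * t) ≤ 0 := by nlinarith
  have hE : shearSymbol k ξ t * ‖g t‖ ^ 2 ≤ modeEnergy α k ξ f g t := by
    unfold modeEnergy; nlinarith [sq_nonneg ‖f t‖]
  have hdiv : -2 * k * (ξ - k * t) * ‖g t‖ ^ 2 ≤
      -2 * k * (ξ - k * t) / shearSymbol k ξ t * modeEnergy α k ξ f g t := by
    rw [div_mul_eq_mul_div, le_div_iff₀ (ha t)]
    nlinarith
  linarith [hle t]

theorem IsShearedBoussinesqMode.exp_mixingWeight_mul_modeEnergy_le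
    (h : IsShearedBoussinesqMode α νx νy ηx ηy k ξ f g) (hα : 0 ≤ α) (hk : 0 < k) (hξ : 0 ≤ ξ)
    {T : ℝ} (hT : 0 ≤ T) :
    exp (mixingWeight (min νx ηx) (min νy ηy) k ξ T) * modeEnergy α k ξ f g T ≤
      (1 + T ^ 2) * modeEnergy α k ξ f g 0 := by
  set Φ := mixingWeight (min νx ηx) (min νy ηy) k ξ
  set E := modeEnergy α k ξ f g
  have hE₀ : 0 ≤ E 0 := modeEnergy_nonneg hα k ξ f g 0
  have ht₀ : 0 ≤ ξ / k := div_nonneg hξ hk.le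
  have hmixing {t : ℝ} (ht : t ≤ ξ / k) (ht' : 0 ≤ t) : exp (Φ t) * E t ≤ E 0 := by
    simpa [Φ, mixingWeight_zero] using
      h.antitoneOn_exp_mixingWeight_mul_modeEnergy hα hk (mem_Iic.2 ht₀) (mem_Iic.2 ht) ht'
  rcases le_total T (ξ / k) with hTt₀ | ht₀T
  · nlinarith [hmixing hTt₀ hT]
  · have hheat := h.antitoneOn_exp_mixingWeight_mul_modeEnergy_div hα hk
      (mem_Ici.2 le_rfl) (mem_Ici.2 ht₀T) ht₀T
    have ha := shearSymbol_pos hk.ne' ξ T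
    simp only [exp_sub, exp_log ha, shearSymbol_div_self hk.ne', exp_log (pow_pos hk 2),
      div_mul_eq_mul_div] at hheat
    rw [div_le_div_iff₀ ha (pow_pos hk 2)] at hheat
    have haT : shearSymbol k ξ T ≤ (1 + T ^ 2) * k ^ 2 := by
      have := (div_le_iff₀ hk).1 ht₀T
      unfold shearSymbol; nlinarith
    refine le_of_mul_le_mul_right ?_ (pow_pos hk 2)
    calc exp (Φ T) * E T * k ^ 2 ≤ exp (Φ (ξ / k)) * E (ξ / k) * shearSymbol k ξ T := hheat
      _ ≤ E 0 * ((1 + T ^ 2) * k ^ 2) := mul_le_mul (hmixing le_rfl ht₀) haT ha.le hE₀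
      _ = (1 + T ^ 2) * E 0 * k ^ 2 := by ring

end ShearedBoussinesqMode

theorem stmt_18_general (α νx νy ηx ηy k ξ : ℝ) (hα : 0 ≤ α)
    (hνy : 0 ≤ νy) (hηy : 0 ≤ ηy)
    (hk : 0 < k) (hξ : 0 ≤ ξ)
    (f g : ℝ → ℂ) (hf : Differentiable ℝ f) (hg : Differentiable ℝ g)
    (hf' : ∀ t : ℝ, deriv f t =
      ((-(νx * k ^ 2) - νy * (ξ - k * t) ^ 2 : ℝ) : ℂ) * f t + Complex.I * (k : ℂ) * g t)
    (hg' : ∀ t : ℝ, deriv g t =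
      Complex.I * (α : ℂ) * (k : ℂ) / ((k ^ 2 + (ξ - k * t) ^ 2 : ℝ) : ℂ) * f t +
      ((-(ηx * k ^ 2) - ηy * (ξ - k * t) ^ 2 : ℝ) : ℂ) * g t) :
    ∀ T : ℝ, 0 ≤ T →
      α * ‖f T‖ ^ 2 + (k ^ 2 + (ξ - k * T) ^ 2) * ‖g T‖ ^ 2 ≤
        (1 + T ^ 2) *
          Real.exp (-2 * min νx ηx * k ^ 2 * T - min νy ηy * k ^ 2 * T ^ 3 / 6) *
          (α * ‖f 0‖ ^ 2 + (k ^ 2 + ξ ^ 2) * ‖g 0‖ ^ 2) := by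
  intro T hT
  have hmode : IsShearedBoussinesqMode α νx νy ηx ηy k ξ f g := fun t =>
    ⟨hf' t ▸ (hf t).hasDerivAt, hg' t ▸ (hg t).hasDerivAt⟩
  have hE₀ : α * ‖f 0‖ ^ 2 + (k ^ 2 + ξ ^ 2) * ‖g 0‖ ^ 2 = modeEnergy α k ξ f g 0 := by
    simp [modeEnergy, shearSymbol]
  rw [hE₀]
  set Φ := mixingWeight (min νx ηx) (min νy ηy) k ξ T
  have hdecay := le_mixingWeight (le_min hνy hηy) hT (min νx ηx) k ξ
  have hE₀_nonneg := modeEnergy_nonneg hα k ξ f g 0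
  calc modeEnergy α k ξ f g T = exp (-Φ) * (exp Φ * modeEnergy α k ξ f g T) := by
        rw [← mul_assoc, ← exp_add, neg_add_cancel, exp_zero, one_mul]
    _ ≤ exp (-Φ) * ((1 + T ^ 2) * modeEnergy α k ξ f g 0) := by
        gcongr ?_ * ?_; exact hmode.exp_mixingWeight_mul_modeEnergy_le hα hk hξ hT
    _ ≤ exp (-2 * min νx ηx * k ^ 2 * T - min νy ηy * k ^ 2 * T ^ 3 / 6) *
          ((1 + T ^ 2) * modeEnergy α k ξ f g 0) := by
        gcongr; linarith
    _ = _ := by ring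

/-- Per-Fourier-mode enhanced dissipation estimate for the linearized Boussinesq
equations about combined shear (β = 1) and hydrostatic balance with partial
dissipation, in coordinates moving with the shear. -/
theorem stmt_18 (α νx νy ηx ηy k ξ : ℝ) (hα : 0 ≤ α)
    (hνx : 0 ≤ νx) (hνy : 0 ≤ νy) (hηx : 0 ≤ ηx) (hηy : 0 ≤ ηy)
    (hk : 0 < k) (hξ : 0 ≤ ξ)
    (f g : ℝ → ℂ) (hf : Differentiable ℝ f) (hg : Differentiable ℝ g)
    (hf' : ∀ t : ℝ, deriv f t =
      ((-(νx * k ^ 2) - νy * (ξ - k * t) ^ 2 : ℝ) : ℂ) * f t + Complex.I * (k : ℂ) * g t)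
    (hg' : ∀ t : ℝ, deriv g t =
      Complex.I * (α : ℂ) * (k : ℂ) / ((k ^ 2 + (ξ - k * t) ^ 2 : ℝ) : ℂ) * f t +
      ((-(ηx * k ^ 2) - ηy * (ξ - k * t) ^ 2 : ℝ) : ℂ) * g t) :
    ∀ T : ℝ, 0 ≤ T →
      α * ‖f T‖ ^ 2 + (k ^ 2 + (ξ - k * T) ^ 2) * ‖g T‖ ^ 2 ≤
        (1 + T ^ 2) *
          Real.exp (-2 * min νx ηx * k ^ 2 * T - min νy ηy * k ^ 2 * T ^ 3 / 6) *
          (α * ‖f 0‖ ^ 2 + (k ^ 2 + ξ ^ 2) * ‖g 0‖ ^ 2) :=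
  stmt_18_general α νx νy ηx ηy k ξ hα hνy hηy hk hξ f g hf hg hf' hg'
end
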